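/- arXiv:2010.00886 — 4 statements merged into one kernel-verified Lean document; each statement's English description precedes it below -/
import Mathlib

section
/- If G is a finite simple subcubic graph of order n ≥ 2, then the exponential independence number of G satisfies α_e(G) ≥ n / (3·2^6·(log n)^2) = n / (192·(log n)^2). -/
open SimpleGraph
open scoped Classical

/-- The graph obtained from `G` by deleting the vertices of `A`
(they are kept as isolated vertices, which does not affect adjacency or distances
among the remaining vertices). -/
def SimpleGraph.deleteSet {V : Type*} (G : SimpleGraph V) (A : Set V) : SimpleGraph V where
  Adj x y := G.Adj x y ∧ x ∉ A ∧ y ∉ A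
  symm := ⟨fun _ _ ⟨h, hx, hy⟩ => ⟨h.symm, hy, hx⟩⟩
  loopless := ⟨fun x ⟨h, _, _⟩ => G.loopless.irrefl x h⟩

/-- `dist_{(G,S)}(u,v)`: the distance between `u` and `v` in `G - (S \ {u,v})`,
with value `⊤` if `u` and `v` lie in different components of that graph. -/
noncomputable def distDel {V : Type*} (G : SimpleGraph V) (S : Set V) (u v : V) : ℕ∞ :=
  (G.deleteSet (S \ {u, v})).edist u v

/-- `w_{(G,S)}(u) = Σ_{v ∈ S} (1/2)^{dist_{(G,S)}(u,v) - 1}` for a finite set `S`,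
where a summand with infinite distance equals `0`. -/
noncomputable def expW {V : Type*} (G : SimpleGraph V) (S : Finset V) (u : V) : ℝ :=
  ∑ v ∈ S, if distDel G (↑S) u v = ⊤ then 0
    else 2 * (1 / 2 : ℝ) ^ (distDel G (↑S) u v).toNat

/-- `S` is exponentially independent in `G`: `w_{(G,S∖{u})}(u) < 1` for every `u ∈ S`. -/
def ExpIndep {V : Type*} (G : SimpleGraph V) (S : Finset V) : Prop :=
  ∀ u ∈ S, expW G (S.erase u) u < 1

/-- The exponential independence number of `G`: the maximum cardinality of an
exponentially independent set in `G`. -/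
noncomputable def expIndepNum (V : Type*) [Fintype V] (G : SimpleGraph V) : ℕ :=
  sSup {m : ℕ | ∃ S : Finset V, ExpIndep G S ∧ S.card = m}

/-!
Distances in `G` are at most the distances after deleting vertices, so the weights
`2 ^ (1 - d(u,v))` computed in `G` itself dominate those of `expW`. In a subcubic graph the sphere
of radius `k + 1` has at most `3 · 2 ^ k` vertices, so each sphere carries weight at most `3` and
every vertex sees total weight at most `3L + 1` once `n ≤ 2 ^ L`. A set `S` maximizing
`|S| - Σ_{u ≠ v ∈ S} w(u,v)` has all inner weights at most `1/2`, hence is exponentially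
independent, while every vertex outside sees weight at least `1/2` from `S`; double counting
gives `n ≤ |S| (6L + 3)`, and `L = ⌊log₂ n⌋ + 1`.
-/

open Finset

section SparseSelection

variable {α : Type*} [DecidableEq α]

noncomputable def pairSum (w : α → α → ℝ) (S : Finset α) : ℝ :=
  ∑ u ∈ S, ∑ v ∈ S.erase u, w u v

lemma pairSum_insert {w : α → α → ℝ} (hsymm : ∀ u v, w u v = w v u) {S : Finset α} {z : α}
    (hz : z ∉ S) : pairSum w (insert z S) = pairSum w S + 2 * ∑ v ∈ S, w z v := by
  have hrow : ∀ u ∈ S, ∑ v ∈ (insert z S).erase u, w u v = w u z + ∑ v ∈ S.erase u, w u v := by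
    intro u hu
    rw [erase_insert_of_ne (ne_of_mem_of_not_mem hu hz).symm,
      sum_insert fun h => hz (mem_of_mem_erase h)]
  simp only [pairSum, sum_insert hz, erase_insert hz, sum_congr rfl hrow, sum_add_distrib,
    hsymm _ z]
  ring

theorem exists_sparse_finset_of_sum_le [Fintype α] (w : α → α → ℝ)
    (hnonneg : ∀ u v, 0 ≤ w u v) (hsymm : ∀ u v, w u v = w v u) {M : ℝ}
    (hM : ∀ u, ∑ v ∈ univ.erase u, w u v ≤ M) :
    ∃ S : Finset α, (∀ u ∈ S, ∑ v ∈ S.erase u, w u v ≤ 1 / 2) ∧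
      (Fintype.card α : ℝ) ≤ #S * (2 * M + 1) := by
  obtain ⟨S, -, hmax⟩ := (univ : Finset (Finset α)).exists_max_image
    (fun S => (#S : ℝ) - pairSum w S) univ_nonempty
  replace hmax : ∀ T, (#T : ℝ) - pairSum w T ≤ #S - pairSum w S := fun T => hmax T (mem_univ T)
  refine ⟨S, fun u hu => ?_, ?_⟩
  · have h := hmax (S.erase u)
    have hS := pairSum_insert hsymm (notMem_erase u S)
    rw [insert_erase hu] at hS
    rw [hS, ← card_erase_add_one hu] at h
    push_cast at h
    linarith
  · have houtside : ∀ z ∈ univ \ S, 1 / 2 ≤ ∑ v ∈ S, w z v := by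
      intro z hz
      have hzS := (mem_sdiff.mp hz).2
      have h := hmax (insert z S)
      rw [pairSum_insert hsymm hzS, card_insert_of_notMem hzS] at h
      push_cast at h
      linarith
    have hrow : ∀ v ∈ S, ∑ z ∈ univ \ S, w v z ≤ M := fun v hv =>
      (sum_le_sum_of_subset_of_nonneg (fun z hz => mem_erase.mpr
        ⟨fun h => (mem_sdiff.mp hz).2 (h ▸ hv), mem_univ z⟩) fun _ _ _ => hnonneg v _).trans (hM v)
    have hcard : (#(univ \ S) : ℝ) = Fintype.card α - #S := by
      rw [card_sdiff_of_subset (subset_univ S), card_univ, Nat.cast_sub (card_le_univ S)]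
    calc (Fintype.card α : ℝ) = #S + 2 * (#(univ \ S) • (1 / 2 : ℝ)) := by
          rw [nsmul_eq_mul, hcard]; ring
      _ ≤ #S + 2 * ∑ z ∈ univ \ S, ∑ v ∈ S, w z v := by
        gcongr
        exact card_nsmul_le_sum _ _ _ houtside
      _ = #S + 2 * ∑ v ∈ S, ∑ z ∈ univ \ S, w v z := by
        rw [sum_comm]; simp only [hsymm _ (_ : α)]
      _ ≤ #S + 2 * (#S * M) := by
        gcongr
        exact (sum_le_card_nsmul S _ M hrow).trans_eq (nsmul_eq_mul _ _)
      _ = #S * (2 * M + 1) := by ring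

end SparseSelection

/-- `(1/2)^(d-1)` for a distance `d`, and `0` for `d = ⊤`: the summand of `expW`. -/
noncomputable def halfPowSubOne (d : ℕ∞) : ℝ :=
  if d = ⊤ then 0 else 2 * (1 / 2 : ℝ) ^ d.toNat

lemma halfPowSubOne_nonneg (d : ℕ∞) : 0 ≤ halfPowSubOne d := by
  unfold halfPowSubOne; split_ifs <;> positivity

lemma halfPowSubOne_coe (k : ℕ) : halfPowSubOne k = 2 * (1 / 2 : ℝ) ^ k := by
  simp [halfPowSubOne]

lemma halfPowSubOne_antitone : Antitone halfPowSubOne := by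
  intro d d' h
  by_cases hd' : d' = ⊤
  · simpa [hd', halfPowSubOne] using halfPowSubOne_nonneg d
  lift d' to ℕ using hd'
  lift d to ℕ using ne_top_of_le_ne_top (ENat.natCast_ne_top d') h
  rw [halfPowSubOne_coe, halfPowSubOne_coe]
  exact mul_le_mul_of_nonneg_left
    (pow_le_pow_of_le_one (by norm_num) (by norm_num) (by exact_mod_cast h)) (by norm_num)

lemma halfPowSubOne_le_of_lt {L : ℕ} {d : ℕ∞} (h : (L : ℕ∞) < d) :
    halfPowSubOne d ≤ ((2 : ℝ) ^ L)⁻¹ := by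
  calc halfPowSubOne d ≤ halfPowSubOne (L + 1 : ℕ) :=
        halfPowSubOne_antitone (by simpa using Order.add_one_le_of_lt h)
    _ = ((2 : ℝ) ^ L)⁻¹ := by rw [halfPowSubOne_coe, one_div, inv_pow]; ring

namespace SimpleGraph

variable {V : Type*} {G : SimpleGraph V}

lemma exists_adj_edist_eq_of_edist_eq_succ {u x : V} {k : ℕ} (h : G.edist u x = (k + 1 : ℕ)) :
    ∃ y, G.Adj y x ∧ G.edist u y = k := by
  obtain ⟨p, hp⟩ := exists_walk_of_edist_eq_coe h
  have hlen : p.reverse.length = k + 1 := p.length_reverse.trans hp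
  cases hq : p.reverse with
  | nil => simp [hq] at hlen
  | @cons _ y _ hxy q =>
    have hq_len : q.length = k := by simpa [hq] using hlen
    refine ⟨y, hxy.symm, le_antisymm ?_ ?_⟩
    · simpa [edist_comm, hq_len] using edist_le q
    · have := h ▸ (G.edist_triangle (u := u) (v := y) (w := x))
      rw [edist_eq_one_iff_adj.mpr hxy.symm] at this
      push_cast at this
      exact (ENat.add_le_add_iff_right ENat.one_ne_top).mp this

lemma deleteSet_le (A : Set V) : G.deleteSet A ≤ G := fun _ _ h => h.1

lemma edist_le_distDel (A : Set V) (u v : V) : G.edist u v ≤ distDel G A u v :=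
  edist_anti (deleteSet_le _)

lemma expW_le_sum_halfPowSubOne_edist (S : Finset V) (u : V) :
    expW G S u ≤ ∑ v ∈ S, halfPowSubOne (G.edist u v) :=
  sum_le_sum fun v _ => halfPowSubOne_antitone (edist_le_distDel _ u v)

variable [Fintype V]

noncomputable def edistSphere (G : SimpleGraph V) (u : V) (k : ℕ) : Finset V :=
  {v | G.edist u v = k}

@[simp]
lemma mem_edistSphere {u v : V} {k : ℕ} : v ∈ G.edistSphere u k ↔ G.edist u v = k := by
  simp [edistSphere]

lemma card_neighborFinset_le {d : ℕ} (hdeg : ∀ v, (G.neighborSet v).ncard ≤ d) (v : V) :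
    #(G.neighborFinset v) ≤ d := by
  have h := hdeg v
  rwa [Set.ncard_eq_toFinset_card'] at h

lemma card_edistSphere_one_le {d : ℕ} (hdeg : ∀ v, (G.neighborSet v).ncard ≤ d) (u : V) :
    #(G.edistSphere u 1) ≤ d :=
  (card_le_card fun v hv => by
    simpa [← edist_eq_one_iff_adj] using hv).trans (card_neighborFinset_le hdeg u)

/-- Each vertex at distance `k + 2` has a neighbour at distance `k + 1`, and each vertex at
distance `k + 1` spends one of its `d` edges on distance `k`. -/
lemma card_edistSphere_add_two_le {d : ℕ} (hdeg : ∀ v, (G.neighborSet v).ncard ≤ d) (u : V)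
    (k : ℕ) : #(G.edistSphere u (k + 2)) ≤ (d - 1) * #(G.edistSphere u (k + 1)) := by
  have h := card_mul_le_card_mul G.Adj (m := 1) (n := d - 1)
    (s := G.edistSphere u (k + 2)) (t := G.edistSphere u (k + 1)) ?_ ?_
  · simpa [mul_comm] using h
  · intro x hx
    obtain ⟨y, hyx, hy⟩ := exists_adj_edist_eq_of_edist_eq_succ (mem_edistSphere.mp hx)
    exact one_le_card.mpr ⟨y, (mem_bipartiteAbove _).mpr ⟨mem_edistSphere.mpr hy, hyx.symm⟩⟩
  · intro y hy
    obtain ⟨z, hzy, hz⟩ := exists_adj_edist_eq_of_edist_eq_succ (mem_edistSphere.mp hy)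
    have hsub : (G.edistSphere u (k + 2)).bipartiteBelow G.Adj y ⊆
        (G.neighborFinset y).erase z := by
      intro x hx
      obtain ⟨hx, hxy⟩ := (mem_bipartiteBelow _).mp hx
      refine mem_erase.mpr ⟨?_, (mem_neighborFinset _ _ _).mpr hxy.symm⟩
      rintro rfl
      rw [mem_edistSphere, hz] at hx
      norm_cast at hx
      omega
    have := card_erase_of_mem ((mem_neighborFinset _ _ _).mpr hzy.symm)
    have := card_neighborFinset_le hdeg y
    exact (card_le_card hsub).trans (by omega)

lemma card_edistSphere_succ_le {d : ℕ} (hdeg : ∀ v, (G.neighborSet v).ncard ≤ d) (u : V)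
    (k : ℕ) : #(G.edistSphere u (k + 1)) ≤ d * (d - 1) ^ k := by
  induction k with
  | zero => simpa using card_edistSphere_one_le hdeg u
  | succ k ih =>
    calc #(G.edistSphere u (k + 2)) ≤ (d - 1) * #(G.edistSphere u (k + 1)) :=
          card_edistSphere_add_two_le hdeg u k
      _ ≤ (d - 1) * (d * (d - 1) ^ k) := Nat.mul_le_mul_left _ ih
      _ = d * (d - 1) ^ (k + 1) := by ring

lemma sum_edistSphere_halfPowSubOne_le (hdeg : ∀ v, (G.neighborSet v).ncard ≤ 3) (u : V)
    (k : ℕ) : ∑ v ∈ G.edistSphere u (k + 1), halfPowSubOne (G.edist u v) ≤ 3 := by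
  have hcard : (#(G.edistSphere u (k + 1)) : ℝ) ≤ 3 * 2 ^ k := by
    exact_mod_cast card_edistSphere_succ_le hdeg u k
  rw [sum_congr rfl fun v hv => by rw [mem_edistSphere.mp hv, halfPowSubOne_coe], sum_const,
    nsmul_eq_mul]
  calc (#(G.edistSphere u (k + 1)) : ℝ) * (2 * (1 / 2) ^ (k + 1))
      ≤ 3 * 2 ^ k * (2 * (1 / 2) ^ (k + 1)) := by gcongr
    _ = 3 := by rw [pow_succ, div_pow]; field_simp; ring

lemma sum_halfPowSubOne_edist_le_of_edist_le (hdeg : ∀ v, (G.neighborSet v).ncard ≤ 3)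
    (L : ℕ) (u : V) :
    ∑ v ∈ (univ.erase u).filter (fun v => G.edist u v ≤ L), halfPowSubOne (G.edist u v) ≤
      3 * L := by
  have hmaps : ∀ v ∈ (univ.erase u).filter (fun v => G.edist u v ≤ L),
      (G.edist u v).toNat - 1 ∈ range L ∧ v ∈ G.edistSphere u ((G.edist u v).toNat - 1 + 1) := by
    intro v hv
    obtain ⟨hvu, hvL⟩ := mem_filter.mp hv
    have hpos := edist_pos_of_ne (G := G) (ne_of_mem_erase hvu).symm
    lift G.edist u v to ℕ using ne_top_of_le_ne_top (ENat.natCast_ne_top L) hvL with d hd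
    norm_cast at hpos hvL
    simp only [ENat.toNat_natCast, mem_range, mem_edistSphere, ← hd]
    exact ⟨by omega, by congr 1; omega⟩
  rw [← sum_fiberwise_of_maps_to fun v hv => (hmaps v hv).1]
  calc _ ≤ ∑ k ∈ range L, ∑ v ∈ G.edistSphere u (k + 1), halfPowSubOne (G.edist u v) := by
        gcongr with k
        · exact fun _ _ _ => halfPowSubOne_nonneg _
        · intro v hv
          obtain ⟨hvs, rfl⟩ := mem_filter.mp hv
          exact (hmaps v hvs).2
    _ ≤ ∑ _k ∈ range L, (3 : ℝ) := sum_le_sum fun k _ => sum_edistSphere_halfPowSubOne_le hdeg u k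
    _ = 3 * L := by simp [mul_comm]

lemma sum_halfPowSubOne_edist_le (hdeg : ∀ v, (G.neighborSet v).ncard ≤ 3) {L : ℕ}
    (hL : Fintype.card V ≤ 2 ^ L) (u : V) :
    ∑ v ∈ univ.erase u, halfPowSubOne (G.edist u v) ≤ 3 * L + 1 := by
  rw [← sum_filter_add_sum_filter_not _ (fun v => G.edist u v ≤ L)]
  have hfar : ∑ v ∈ (univ.erase u).filter (fun v => ¬ G.edist u v ≤ L),
      halfPowSubOne (G.edist u v) ≤ 1 := by
    calc _ ≤ ∑ _v ∈ (univ.erase u).filter (fun v => ¬ G.edist u v ≤ L), ((2 : ℝ) ^ L)⁻¹ :=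
          sum_le_sum fun v hv => halfPowSubOne_le_of_lt (not_le.mp (mem_filter.mp hv).2)
      _ ≤ Fintype.card V * ((2 : ℝ) ^ L)⁻¹ := by
          rw [sum_const, nsmul_eq_mul]
          gcongr
          exact_mod_cast card_le_univ _
      _ ≤ 2 ^ L * ((2 : ℝ) ^ L)⁻¹ := by gcongr; exact_mod_cast hL
      _ = 1 := by field_simp
  linarith [sum_halfPowSubOne_edist_le_of_edist_le hdeg L u]

end SimpleGraph

lemma card_le_expIndepNum {V : Type*} [Fintype V] {G : SimpleGraph V} {S : Finset V}
    (hS : ExpIndep G S) : #S ≤ expIndepNum V G :=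
  le_csSup ⟨Fintype.card V, fun _ ⟨T, _, hT⟩ => hT ▸ card_le_univ T⟩ ⟨S, hS, rfl⟩

/-- If `G` is a finite simple subcubic graph of order `n ≥ 2`, then
`α_e(G) ≥ n / (3·2^6·(log₂ n)^2)`. -/
theorem stmt0 {V : Type*} [Fintype V] (G : SimpleGraph V)
    (hn : 2 ≤ Fintype.card V)
    (hsub : ∀ v : V, (G.neighborSet v).ncard ≤ 3) :
    (Fintype.card V : ℝ) / (3 * 2 ^ 6 * Real.logb 2 (Fintype.card V) ^ 2)
      ≤ (expIndepNum V G : ℝ) := by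
  set n := Fintype.card V
  obtain ⟨S, hsparse, hcard⟩ := exists_sparse_finset_of_sum_le
    (fun u v => halfPowSubOne (G.edist u v)) (fun _ _ => halfPowSubOne_nonneg _)
    (fun u v => by rw [edist_comm])
    (G.sum_halfPowSubOne_edist_le hsub (Nat.lt_pow_succ_log_self one_lt_two n).le)
  have hS : ExpIndep G S := fun u hu =>
    (G.expW_le_sum_halfPowSubOne_edist _ u).trans_lt (by linarith [hsparse u hu])
  have hlog : 1 ≤ Real.logb 2 n := by
    rw [Real.le_logb_iff_rpow_le one_lt_two (by positivity)]
    exact_mod_cast hn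
  have hden : 2 * (3 * ((Nat.log 2 n + 1 : ℕ) : ℝ) + 1) + 1 ≤ 3 * 2 ^ 6 * Real.logb 2 n ^ 2 := by
    have hnat : (Nat.log 2 n : ℝ) ≤ Real.logb 2 n := by exact_mod_cast Real.natLog_le_logb n 2
    push_cast
    nlinarith
  rw [div_le_iff₀ (by positivity)]
  calc (n : ℝ) ≤ #S * (2 * (3 * ((Nat.log 2 n + 1 : ℕ) : ℝ) + 1) + 1) := hcard
    _ ≤ #S * (3 * 2 ^ 6 * Real.logb 2 n ^ 2) := by gcongr
    _ ≤ expIndepNum V G * (3 * 2 ^ 6 * Real.logb 2 n ^ 2) := by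
      gcongr
      exact_mod_cast card_le_expIndepNum hS
end

section
/- Let G be a finite simple subcubic graph of order n ≥ 2 and let d* = ⌈log(log n)⌉ + 2. If S is a set of vertices of G such that the distance in G between any two distinct vertices of S is more than 2d*, then S is exponentially independent in G. -/
open SimpleGraph
open scoped Classical

/-! Deleting vertices only lengthens distances, so it suffices to show
`∑ 2 ^ (1 - d(u, v)) < 1` over the vertices `v ≠ u` of `S`. Moving each such `v` back by `d*`
along a shortest `u`–`v` path is injective, because the vertices of `S` are more than `2d*`
apart; this bounds the sum by `2 ^ (1 - d*) ∑ₓ 2 ^ (-d(u, x))` over distinct vertices `x` at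
distance more than `d*` from `u`. In a subcubic graph the sphere of radius `j` has at most
`3 · 2 ^ (j - 1)` vertices, so every radius below `ℓ = 2 ^ (d* - 2)` contributes at most `3/2`,
while the at most `n ≤ 2 ^ ℓ` vertices beyond contribute at most `1` in total. Hence the sum is
at most `2 ^ (1 - d*) (3/2 (ℓ - d* - 1) + 1) < 1`. -/

open Finset

namespace SimpleGraph

variable {V : Type*} {G : SimpleGraph V} {u v : V}

lemma Reachable.exists_dist_eq_of_le_dist (hr : G.Reachable u v) {i : ℕ} (hi : i ≤ G.dist u v) :
    ∃ x, G.dist u x = i ∧ G.edist x v = (G.dist u v - i : ℕ) := by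
  obtain ⟨p, hp⟩ := hr.exists_walk_length_eq_dist
  refine ⟨p.getVert i, ?_, ?_⟩
  · rw [← length_eq_dist_of_subwalk hp (p.isSubwalk_take i), Walk.take_length]
    omega
  · rw [← (p.drop i).reachable.coe_dist_eq_edist,
      ← length_eq_dist_of_subwalk hp (p.isSubwalk_drop i), Walk.drop_length, hp]

lemma exists_adj_dist_eq_of_dist_eq_succ {k : ℕ} (h : G.dist u v = k + 1) :
    ∃ w, G.Adj w v ∧ G.dist u w = k := by
  have hr : G.Reachable u v := Reachable.of_dist_ne_zero (by omega)
  obtain ⟨w, huw, hwv⟩ := hr.exists_dist_eq_of_le_dist (i := k) (by omega)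
  refine ⟨w, edist_eq_one_iff_adj.mp ?_, huw⟩
  rw [hwv, h]
  simp

lemma exists_injOn_dist_add_eq {F : Finset V} {d : ℕ}
    (hF : ∀ v ∈ F, G.Reachable u v ∧ d ≤ G.dist u v)
    (hsep : ∀ v ∈ F, ∀ w ∈ F, v ≠ w → (2 * d : ℕ∞) < G.edist v w) :
    ∃ m : V → V, Set.InjOn m F ∧ ∀ v ∈ F, G.dist u (m v) + d = G.dist u v := by
  have hmid : ∀ v ∈ F, ∃ x, G.dist u x + d = G.dist u v ∧ G.edist x v = d := by
    intro v hv
    obtain ⟨x, hux, hxv⟩ := (hF v hv).1.exists_dist_eq_of_le_dist (Nat.sub_le _ d)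
    have hd := (hF v hv).2
    refine ⟨x, by omega, ?_⟩
    rw [hxv, Nat.sub_sub_self hd]
  choose! m hm using hmid
  refine ⟨m, fun v hv w hw hvw => by_contra fun hne => (hsep v hv w hw hne).not_ge ?_,
    fun v hv => (hm v hv).1⟩
  calc G.edist v w ≤ G.edist v (m v) + G.edist (m w) w := hvw ▸ SimpleGraph.edist_triangle
    _ = 2 * d := by rw [edist_comm, (hm v hv).2, (hm w hw).2, two_mul]

variable [Fintype V] [DecidableRel G.Adj]

theorem card_dist_eq_succ_le {Δ : ℕ} (hΔ : ∀ v, G.degree v ≤ Δ) (u : V) (k : ℕ) :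
    #{x | G.dist u x = k + 1} ≤ Δ * (Δ - 1) ^ k := by
  induction k with
  | zero =>
    have : ({x | G.dist u x = 0 + 1} : Finset V) = G.neighborFinset u := by
      ext
      simp [dist_eq_one_iff_adj]
    rw [this, card_neighborFinset_eq_degree]
    simpa using hΔ u
  | succ k ih =>
    have hcover : ({x | G.dist u x = k + 1 + 1} : Finset V) ⊆
        ({w | G.dist u w = k + 1} : Finset V).biUnion
          fun w => {x ∈ G.neighborFinset w | G.dist u x = k + 1 + 1} := by
      intro x hx
      rw [mem_filter_univ] at hx
      obtain ⟨w, hwx, hw⟩ := exists_adj_dist_eq_of_dist_eq_succ hx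
      simp only [mem_biUnion, mem_filter, mem_neighborFinset]
      exact ⟨w, ⟨mem_univ w, hw⟩, hwx, hx⟩
    have hfibre : ∀ w ∈ ({w | G.dist u w = k + 1} : Finset V),
        #{x ∈ G.neighborFinset w | G.dist u x = k + 1 + 1} ≤ Δ - 1 := by
      intro w hw
      rw [mem_filter_univ] at hw
      obtain ⟨w', hw'w, hw'⟩ := exists_adj_dist_eq_of_dist_eq_succ hw
      have hsub : {x ∈ G.neighborFinset w | G.dist u x = k + 1 + 1} ⊆
          (G.neighborFinset w).erase w' := by
        intro x hx
        rw [mem_filter] at hx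
        refine mem_erase.mpr ⟨?_, hx.1⟩
        rintro rfl
        omega
      calc _ ≤ #((G.neighborFinset w).erase w') := card_le_card hsub
        _ ≤ Δ - 1 := by
          rw [card_erase_of_mem (by simpa using hw'w.symm), card_neighborFinset_eq_degree]
          exact Nat.sub_le_sub_right (hΔ w) 1
    calc _ ≤ _ := card_le_card hcover
      _ ≤ _ := card_biUnion_le_card_mul _ _ _ hfibre
      _ ≤ Δ * (Δ - 1) ^ k * (Δ - 1) := by gcongr
      _ = Δ * (Δ - 1) ^ (k + 1) := by ring

lemma card_dist_eq_mul_half_pow_le (hΔ : ∀ v, G.degree v ≤ 3) (u : V) {j : ℕ} (hj : 0 < j) :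
    (#{x | G.dist u x = j} : ℝ) * (1 / 2) ^ j ≤ 3 / 2 := by
  obtain ⟨k, rfl⟩ := Nat.exists_eq_add_of_lt hj
  have hcard : (#{x | G.dist u x = 0 + k + 1} : ℝ) ≤ 3 * 2 ^ k := by
    have := card_dist_eq_succ_le hΔ u k
    rw [zero_add]
    exact_mod_cast this
  calc _ ≤ (3 * 2 ^ k : ℝ) * (1 / 2) ^ (0 + k + 1) := by gcongr
    _ = 3 / 2 * (2 * (1 / 2)) ^ k := by rw [mul_pow]; ring
    _ = 3 / 2 := by norm_num

theorem sum_half_pow_dist_le (hΔ : ∀ v, G.degree v ≤ 3) (u : V) {X : Finset V} {a : ℕ}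
    (ha : 0 < a) (hX : ∀ x ∈ X, a ≤ G.dist u x) (J : ℕ) :
    ∑ x ∈ X, (1 / 2 : ℝ) ^ G.dist u x ≤ 3 / 2 * (J - a : ℕ) + #X * (1 / 2) ^ J := by
  rw [← sum_filter_add_sum_filter_not X (fun x => G.dist u x < J)]
  gcongr ?_ + ?_
  · rw [← sum_fiberwise_of_maps_to (g := G.dist u) (t := Ico a J) fun x hx => by
      rw [mem_filter] at hx
      exact mem_Ico.mpr ⟨hX x hx.1, hx.2⟩]
    calc _ ≤ ∑ j ∈ Ico a J, (3 / 2 : ℝ) := sum_le_sum fun j hj => ?_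
      _ = _ := by simp [mul_comm]
    rw [sum_congr rfl fun x hx => by rw [(mem_filter.mp hx).2], sum_const, nsmul_eq_mul]
    calc _ ≤ (#{x | G.dist u x = j} : ℝ) * (1 / 2) ^ j := by
          gcongr
          exact subset_univ _
      _ ≤ 3 / 2 := card_dist_eq_mul_half_pow_le hΔ u (by linarith [(mem_Ico.mp hj).1])
  · calc _ ≤ ∑ x ∈ X with ¬G.dist u x < J, (1 / 2 : ℝ) ^ J := sum_le_sum fun x hx =>
          pow_le_pow_of_le_one (by norm_num) (by norm_num) (not_lt.mp (mem_filter.mp hx).2)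
      _ ≤ _ := by
        rw [sum_const, nsmul_eq_mul]
        gcongr
        exact filter_subset _ _

theorem sum_half_pow_dist_le_of_separated (hΔ : ∀ v, G.degree v ≤ 3) {F : Finset V} {d ℓ : ℕ}
    (hV : Fintype.card V ≤ 2 ^ ℓ) (hF : ∀ v ∈ F, G.Reachable u v ∧ 2 * d < G.dist u v)
    (hsep : ∀ v ∈ F, ∀ w ∈ F, v ≠ w → (2 * d : ℕ∞) < G.edist v w) :
    ∑ v ∈ F, (1 / 2 : ℝ) ^ G.dist u v ≤ (1 / 2) ^ d * (3 / 2 * (ℓ - (d + 1) : ℕ) + 1) := by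
  obtain ⟨m, hinj, hm⟩ :=
    exists_injOn_dist_add_eq (fun v hv => ⟨(hF v hv).1, by linarith [(hF v hv).2]⟩) hsep
  have hfar : ∀ x ∈ F.image m, d + 1 ≤ G.dist u x := by
    simp only [mem_image, forall_exists_index, and_imp, forall_apply_eq_imp_iff₂]
    intro v hv
    have := hm v hv
    have := (hF v hv).2
    omega
  have hcard : (#(F.image m) : ℝ) * (1 / 2) ^ ℓ ≤ 1 := by
    calc (#(F.image m) : ℝ) * (1 / 2) ^ ℓ ≤ 2 ^ ℓ * (1 / 2) ^ ℓ := by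
          gcongr
          exact_mod_cast (card_le_univ _).trans hV
      _ = 1 := by rw [← mul_pow]; norm_num
  calc ∑ v ∈ F, (1 / 2 : ℝ) ^ G.dist u v
      = (1 / 2) ^ d * ∑ x ∈ F.image m, (1 / 2 : ℝ) ^ G.dist u x := by
        rw [sum_image hinj, mul_sum]
        refine sum_congr rfl fun v hv => ?_
        rw [← hm v hv, pow_add, mul_comm]
    _ ≤ (1 / 2) ^ d * (3 / 2 * (ℓ - (d + 1) : ℕ) + #(F.image m) * (1 / 2) ^ ℓ) := by
        gcongr
        exact sum_half_pow_dist_le hΔ u (Nat.succ_pos d) hfar ℓ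
    _ ≤ _ := by gcongr

end SimpleGraph

section

variable {V : Type*} {G : SimpleGraph V} {u v : V}

lemma edist_le_distDel (S : Set V) : G.edist u v ≤ distDel G S u v :=
  edist_anti fun _ _ h => h.1

lemma expW_le_sum_reachable [DecidablePred (G.Reachable u)] (T : Finset V) :
    expW G T u ≤ ∑ v ∈ T with G.Reachable u v, 2 * (1 / 2 : ℝ) ^ G.dist u v := by
  rw [sum_filter]
  refine sum_le_sum fun v _ => ?_
  split_ifs with htop hr hr
  · positivity
  · rfl
  · gcongr 2 * ?_
    exact pow_le_pow_of_le_one (by norm_num) (by norm_num)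
      (ENat.toNat_le_toNat (edist_le_distDel _) htop)
  · exact absurd (reachable_of_edist_ne_top (ne_top_of_le_ne_top htop (edist_le_distDel _))) hr

end

lemma le_two_pow_two_pow_ceil_logb_logb (n : ℕ) :
    n ≤ 2 ^ 2 ^ (⌈Real.logb 2 (Real.logb 2 n)⌉).toNat := by
  set e := (⌈Real.logb 2 (Real.logb 2 n)⌉).toNat
  rcases le_or_gt n 1 with hn | hn
  · exact hn.trans Nat.one_le_two_pow
  have hlog : 0 < Real.logb 2 n := Real.logb_pos one_lt_two (by exact_mod_cast hn)
  have he : Real.logb 2 (Real.logb 2 n) ≤ e :=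
    (Int.le_ceil _).trans (by exact_mod_cast Int.self_le_toNat _)
  rw [Real.logb_le_iff_le_rpow one_lt_two hlog, Real.rpow_natCast] at he
  rw [Real.logb_le_iff_le_rpow one_lt_two (by positivity),
    show (2 : ℝ) ^ e = ((2 ^ e : ℕ) : ℝ) by push_cast; rfl, Real.rpow_natCast] at he
  exact_mod_cast he

lemma two_mul_half_pow_mul_lt_one {e ℓ : ℕ} (hℓ : ℓ ≤ 2 ^ e) :
    2 * ((1 / 2 : ℝ) ^ (e + 2) * (3 / 2 * (ℓ - (e + 2 + 1) : ℕ) + 1)) < 1 := by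
  have key : 3 * (ℓ - (e + 2 + 1)) + 2 < 2 ^ (e + 2) := by
    have := Nat.one_le_two_pow (n := e)
    rw [pow_add]
    omega
  have hkey : (3 / 2 * ((ℓ - (e + 2 + 1) : ℕ) : ℝ) + 1) * 2 < 2 ^ (e + 2) := by
    have : ((3 * (ℓ - (e + 2 + 1)) + 2 : ℕ) : ℝ) < 2 ^ (e + 2) := by exact_mod_cast key
    push_cast at this
    linarith
  rw [one_div_pow]
  calc 2 * (1 / 2 ^ (e + 2) * (3 / 2 * ((ℓ - (e + 2 + 1) : ℕ) : ℝ) + 1))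
      = (3 / 2 * ((ℓ - (e + 2 + 1) : ℕ) : ℝ) + 1) * 2 / 2 ^ (e + 2) := by ring
    _ < 1 := (div_lt_one (by positivity)).mpr hkey

theorem stmt1_general {V : Type*} [Fintype V] (G : SimpleGraph V)
    (hsub : ∀ v : V, (G.neighborSet v).ncard ≤ 3)
    (dstar : ℕ)
    (hdstar : dstar = (⌈Real.logb 2 (Real.logb 2 (Fintype.card V))⌉).toNat + 2)
    (S : Finset V)
    (hsep : ∀ u ∈ S, ∀ v ∈ S, u ≠ v → (2 * dstar : ℕ∞) < G.edist u v) :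
    ExpIndep G S := by
  intro u hu
  set e := (⌈Real.logb 2 (Real.logb 2 (Fintype.card V))⌉).toNat
  have hdeg : ∀ v, G.degree v ≤ 3 := fun v => by
    rw [← card_neighborSet_eq_degree, ← Nat.card_eq_fintype_card, Nat.card_coe_set_eq]
    exact hsub v
  set F := {v ∈ S.erase u | G.Reachable u v}
  have hF : ∀ v ∈ F, G.Reachable u v ∧ 2 * dstar < G.dist u v := by
    intro v hv
    obtain ⟨hvS, hr⟩ := mem_filter.mp hv
    refine ⟨hr, ?_⟩
    have := hsep u hu v (mem_of_mem_erase hvS) (ne_of_mem_erase hvS).symm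
    rw [← hr.coe_dist_eq_edist] at this
    exact_mod_cast this
  have hsepF : ∀ v ∈ F, ∀ w ∈ F, v ≠ w → (2 * dstar : ℕ∞) < G.edist v w := fun v hv w hw =>
    hsep v (mem_of_mem_erase (mem_filter.mp hv).1) w (mem_of_mem_erase (mem_filter.mp hw).1)
  calc expW G (S.erase u) u
      ≤ ∑ v ∈ F, 2 * (1 / 2 : ℝ) ^ G.dist u v := expW_le_sum_reachable (S.erase u)
    _ = 2 * ∑ v ∈ F, (1 / 2 : ℝ) ^ G.dist u v := (mul_sum ..).symm
    _ ≤ 2 * ((1 / 2) ^ dstar * (3 / 2 * (2 ^ e - (dstar + 1) : ℕ) + 1)) := by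
        gcongr
        exact sum_half_pow_dist_le_of_separated hdeg
          (le_two_pow_two_pow_ceil_logb_logb _) hF hsepF
    _ < 1 := hdstar ▸ two_mul_half_pow_mul_lt_one le_rfl

/-- If `G` is a finite simple subcubic graph of order `n ≥ 2`,
`d* = ⌈log₂(log₂ n)⌉ + 2`, and `S` is a set of vertices of `G` any two distinct
members of which are at distance more than `2d*` in `G`, then `S` is exponentially
independent in `G`. -/
theorem stmt1 {V : Type*} [Fintype V] (G : SimpleGraph V)
    (hn : 2 ≤ Fintype.card V)
    (hsub : ∀ v : V, (G.neighborSet v).ncard ≤ 3)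
    (dstar : ℕ)
    (hdstar : dstar = (⌈Real.logb 2 (Real.logb 2 (Fintype.card V))⌉).toNat + 2)
    (S : Finset V)
    (hsep : ∀ u ∈ S, ∀ v ∈ S, u ≠ v → (2 * dstar : ℕ∞) < G.edist u v) :
    ExpIndep G S :=
  stmt1_general G hsub dstar hdstar S hsep
end

section
/- There is no constant c > 0 such that α_e(T(6,d)) ≥ c·n(T(6,d)) + 1 for every positive integer d. Equivalently: for every c > 0 there exists a positive integer d such that every finite tree T isomorphic to T(6,d) satisfies α_e(T) < c·n(T) + 1, where n(T(6,d)) = (3·5^d − 1)/2. -/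
open SimpleGraph
open scoped Classical

/-- `G` is (isomorphic to) the tree `T(Δ,d)` with root `r`: a finite tree in which every
leaf is at distance exactly `d` from `r` and every non-leaf vertex has degree `Δ`. -/
def IsTreeTDelta {V : Type*} (G : SimpleGraph V) (r : V) (Δ d : ℕ) : Prop :=
  G.Connected ∧ G.IsAcyclic ∧
  (∀ v : V, (G.neighborSet v).ncard = 1 → G.edist r v = (d : ℕ∞)) ∧
  (∀ v : V, (G.neighborSet v).ncard ≠ 1 → (G.neighborSet v).ncard = Δ)

/-!
An exponentially independent set `S` in a connected graph of diameter at most `D` has at most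
`2 ^ D` elements. Fix `u ∈ S` and, for `p ∈ S`, count the members of `S` reached from `u` by a
shortest path through `p`. Apart from `p` itself, each of them lies behind some `q ∈ S` that `p`
sees first along such a path. No vertex of `S` lies between `p` and `q`, so `q` contributes at
least `2 ^ (1 - dist p q)` to the weight at `p`, and these contributions sum to less than `1`.
Induction on `D - dist u p` gives the bound `2 ^ (D - dist u p)`, hence `|S| ≤ 2 ^ D`.

In `T(6,d)` every vertex is within distance `d` of the root, so `α_e ≤ 2 ^ (2d) = 4 ^ d`, while the
`k`-th layer has at least `5 ^ k` vertices; thus `α_e / n ≤ (4/5) ^ d → 0`.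
-/

lemma two_mul_sum_lt_two_pow {ι : Type*} (T : Finset ι) (a e : ι → ℕ) (E : ℕ)
    (he : ∀ i ∈ T, e i ≤ E) (ha : ∀ i ∈ T, a i ≤ 2 ^ (E - e i))
    (hw : ∑ i ∈ T, 2 * (1 / 2 : ℝ) ^ e i < 1) : 2 * ∑ i ∈ T, a i < 2 ^ E := by
  have hreal : (2 * ∑ i ∈ T, a i : ℝ) < 2 ^ E := calc
    (2 * ∑ i ∈ T, a i : ℝ) ≤ 2 * ∑ i ∈ T, (2 : ℝ) ^ (E - e i) := by
      push_cast
      gcongr with i hi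
      exact_mod_cast ha i hi
    _ = 2 ^ E * ∑ i ∈ T, 2 * (1 / 2 : ℝ) ^ e i := by
      rw [Finset.mul_sum, Finset.mul_sum]
      refine Finset.sum_congr rfl fun i hi => ?_
      rw [pow_sub₀ _ two_ne_zero (he i hi), one_div, inv_pow]
      ring
    _ < 2 ^ E := mul_lt_of_lt_one_right (by positivity) hw
  exact_mod_cast hreal

namespace SimpleGraph

variable {V : Type*} {G : SimpleGraph V}

def Between (G : SimpleGraph V) (x z y : V) : Prop :=
  G.dist x z + G.dist z y = G.dist x y

lemma Walk.between_of_mem_support {x y z : V} (p : G.Walk x y) (hp : p.length = G.dist x y)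
    (hz : z ∈ p.support) : G.Between x z y := by
  have h₁ : G.dist x z ≤ (p.takeUntil z hz).length := dist_le _
  have h₂ : G.dist z y ≤ (p.dropUntil z hz).length := dist_le _
  have hsplit : (p.takeUntil z hz).length + (p.dropUntil z hz).length = p.length := by
    rw [← Walk.length_append, Walk.take_spec]
  have := (p.takeUntil z hz).reachable.dist_triangle_left y
  unfold Between
  omega

lemma distDel_le_dist {S : Set V} {p q : V} (hpq : G.Reachable p q)
    (hvis : ∀ z ∈ S, z ≠ p → z ≠ q → ¬ G.Between p z q) : distDel G S p q ≤ G.dist p q := by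
  obtain ⟨P, -, hP⟩ := hpq.exists_path_of_dist
  have hedges : ∀ e ∈ P.edges, e ∈ (G.deleteSet (S \ {p, q})).edgeSet := by
    intro e he
    induction e using Sym2.ind with
    | _ x y =>
      have hnot : ∀ z ∈ P.support, z ∉ S \ {p, q} := by
        rintro z hz ⟨hzS, hzpq⟩
        simp only [Set.mem_insert_iff, Set.mem_singleton_iff, not_or] at hzpq
        exact hvis z hzS hzpq.1 hzpq.2 (P.between_of_mem_support hP hz)
      exact ⟨P.edges_subset_edgeSet he, hnot x (P.fst_mem_support_of_mem_edges he),
        hnot y (P.snd_mem_support_of_mem_edges he)⟩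
  calc distDel G S p q ≤ (P.transfer _ hedges).length := edist_le _
    _ = G.dist p q := by rw [Walk.length_transfer, hP]

lemma sum_le_expW {S T : Finset V} {u : V} (hconn : G.Connected) (hTS : T ⊆ S)
    (hvis : ∀ q ∈ T, ∀ z ∈ S, z ≠ u → z ≠ q → ¬ G.Between u z q) :
    ∑ q ∈ T, 2 * (1 / 2 : ℝ) ^ G.dist u q ≤ expW G S u := by
  unfold expW
  refine (Finset.sum_le_sum fun q hq => ?_).trans
    (Finset.sum_le_sum_of_subset_of_nonneg hTS fun _ _ _ => by split_ifs <;> positivity)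
  have hle := distDel_le_dist (S := S) (hconn u q) (hvis q hq)
  have hne : distDel G S u q ≠ ⊤ := ne_top_of_le_ne_top (ENat.natCast_ne_top _) hle
  rw [if_neg hne]
  gcongr 2 * ?_
  exact pow_le_pow_of_le_one (by norm_num) (by norm_num) (ENat.toNat_le_of_le_natCast hle)

noncomputable def cone (G : SimpleGraph V) (S : Finset V) (u p : V) : Finset V :=
  S.filter (G.Between u p ·)

noncomputable def visibleSucc (G : SimpleGraph V) (S : Finset V) (u p : V) : Finset V :=
  (S.erase p).filter fun q => G.Between u p q ∧ ∀ z ∈ S, z ≠ p → z ≠ q → ¬ G.Between p z q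

variable {S : Finset V} {u p : V}

lemma cone_subset_insert_biUnion (hconn : G.Connected) :
    G.cone S u p ⊆ insert p ((G.visibleSucc S u p).biUnion (G.cone S u)) := by
  intro v hv
  rw [Finset.mem_insert, Finset.mem_biUnion]
  refine or_iff_not_imp_left.mpr fun hvp => ?_
  obtain ⟨hvS, hpv⟩ := Finset.mem_filter.mp hv
  set B := (S.erase p).filter fun z => G.Between u p z ∧ G.Between u z v
  have hvB : v ∈ B := Finset.mem_filter.mpr
    ⟨Finset.mem_erase.mpr ⟨hvp, hvS⟩, hpv, by simp [Between]⟩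
  obtain ⟨q, hqB, hqmin⟩ := B.exists_min_image (G.dist u) ⟨v, hvB⟩
  obtain ⟨hqS', hpq, hqv⟩ := Finset.mem_filter.mp hqB
  refine ⟨q, Finset.mem_filter.mpr ⟨hqS', hpq, fun z hzS hzp hzq hpzq => ?_⟩,
    Finset.mem_filter.mpr ⟨hvS, hqv⟩⟩
  -- a member of `S` strictly between `p` and `q` would be a closer candidate than `q`
  have := hconn.dist_triangle (u := u) (v := p) (w := z)
  have := hconn.dist_triangle (u := u) (v := z) (w := q)
  have := hconn.dist_triangle (u := z) (v := q) (w := v)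
  have := hconn.dist_triangle (u := u) (v := z) (w := v)
  have := hconn.pos_dist_of_ne hzq
  have hzB : z ∈ B := Finset.mem_filter.mpr
    ⟨Finset.mem_erase.mpr ⟨hzp, hzS⟩, by unfold Between at *; omega, by unfold Between at *; omega⟩
  have := hqmin z hzB
  unfold Between at *
  omega

lemma sum_visibleSucc_lt_one (hconn : G.Connected) (hS : ExpIndep G S) (hp : p ∈ S) :
    ∑ q ∈ G.visibleSucc S u p, 2 * (1 / 2 : ℝ) ^ G.dist p q < 1 := by
  refine lt_of_le_of_lt (sum_le_expW hconn (Finset.filter_subset _ _) fun q hq z hz hzp hzq => ?_)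
    (hS p hp)
  exact (Finset.mem_filter.mp hq).2.2 z (Finset.mem_of_mem_erase hz) hzp hzq

lemma card_cone_le (hconn : G.Connected) (hS : ExpIndep G S) {D : ℕ}
    (hdiam : ∀ x y, G.dist x y ≤ D) (hp : p ∈ S) :
    (G.cone S u p).card ≤ 2 ^ (D - G.dist u p) := by
  induction hE : D - G.dist u p using Nat.strong_induction_on generalizing p with
  | _ E ih =>
  have hsucc : ∀ q ∈ G.visibleSucc S u p,
      q ∈ S ∧ G.dist p q ≤ E ∧ D - G.dist u q = E - G.dist p q ∧ 0 < G.dist p q := by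
    intro q hq
    obtain ⟨hqS, hpq, -⟩ := Finset.mem_filter.mp hq
    have hpos := hconn.pos_dist_of_ne (Finset.ne_of_mem_erase hqS).symm
    have := hdiam u q
    unfold Between at hpq
    exact ⟨Finset.mem_of_mem_erase hqS, by omega, by omega, hpos⟩
  have hsum := two_mul_sum_lt_two_pow _ (fun q => (G.cone S u q).card) (G.dist p) E
    (fun q hq => (hsucc q hq).2.1)
    (fun q hq => by
      obtain ⟨hqS, hle, heq, hpos⟩ := hsucc q hq
      exact heq ▸ ih _ (by omega) hqS rfl)
    (sum_visibleSucc_lt_one hconn hS hp)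
  have := Nat.one_le_two_pow (n := E)
  calc (G.cone S u p).card
      ≤ (insert p ((G.visibleSucc S u p).biUnion (G.cone S u))).card :=
        Finset.card_le_card (cone_subset_insert_biUnion hconn)
    _ ≤ ∑ q ∈ G.visibleSucc S u p, (G.cone S u q).card + 1 :=
        (Finset.card_insert_le _ _).trans (Nat.add_le_add_right Finset.card_biUnion_le 1)
    _ ≤ 2 ^ E := by omega

theorem _root_.ExpIndep.card_le_two_pow (hconn : G.Connected) (hS : ExpIndep G S) {D : ℕ}
    (hdiam : ∀ x y, G.dist x y ≤ D) : S.card ≤ 2 ^ D := by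
  obtain rfl | ⟨u, hu⟩ := S.eq_empty_or_nonempty
  · simp
  have hcone : G.cone S u u = S := Finset.filter_true_of_mem fun v _ => by simp [Between]
  simpa [hcone] using card_cone_le (u := u) hconn hS hdiam hu

lemma IsTree.eq_of_adj_of_dist_lt (hG : G.IsTree) {r x y₁ y₂ : V} (h₁ : G.Adj x y₁)
    (h₂ : G.Adj x y₂) (hd₁ : G.dist r y₁ < G.dist r x) (hd₂ : G.dist r y₂ < G.dist r x) :
    y₁ = y₂ := by
  obtain ⟨p, hp, hpx⟩ := hG.connected.exists_path_of_dist r x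
  -- a closer neighbour `y` of `x` lies on the path from `r` to `x`, so it is its penultimate vertex
  have hpen : ∀ y, G.Adj x y → G.dist r y < G.dist r x → y = p.penultimate := by
    intro y hxy hyx
    obtain ⟨q, hq, hqy⟩ := hG.connected.exists_path_of_dist r y
    have hxq : x ∉ q.support := fun hx =>
      ((dist_le (q.takeUntil x hx)).trans (q.length_takeUntil_le_length hx)).not_gt (hqy ▸ hyx)
    exact hG.isAcyclic.eq_penultimate_of_adj_end hp hxy
      (hG.isAcyclic.mem_support_of_ne_mem_support_of_adj_of_isPath hp hq hxy hxq)
  exact (hpen y₁ h₁ hd₁).trans (hpen y₂ h₂ hd₂).symm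

lemma IsTree.card_filter_adj_dist_lt_le_one (hG : G.IsTree) (s : Finset V) (r x : V) :
    (s.filter fun y => G.Adj x y ∧ G.dist r y < G.dist r x).card ≤ 1 :=
  Finset.card_le_one.mpr fun _ h₁ _ h₂ =>
    hG.eq_of_adj_of_dist_lt (Finset.mem_filter.mp h₁).2.1 (Finset.mem_filter.mp h₂).2.1
      (Finset.mem_filter.mp h₁).2.2 (Finset.mem_filter.mp h₂).2.2

end SimpleGraph

namespace IsTreeTDelta

open SimpleGraph

variable {V : Type*} {G : SimpleGraph V} {r : V} {Δ d : ℕ}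

lemma isTree (hT : IsTreeTDelta G r Δ d) : G.IsTree := ⟨hT.1, hT.2.1⟩

lemma dist_eq_of_ncard_eq_one (hT : IsTreeTDelta G r Δ d) {v : V}
    (hv : (G.neighborSet v).ncard = 1) : G.dist r v = d := by
  rw [SimpleGraph.dist, hT.2.2.1 v hv, ENat.toNat_natCast]

lemma dist_le [Finite V] (hT : IsTreeTDelta G r Δ d) (hΔ : 2 ≤ Δ) (x : V) : G.dist r x ≤ d := by
  have : Nonempty V := hT.1.nonempty
  obtain ⟨x₀, hx₀⟩ := Finite.exists_max (G.dist r)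
  by_cases hleaf : (G.neighborSet x₀).ncard = 1
  · exact hT.dist_eq_of_ncard_eq_one hleaf ▸ hx₀ x
  exfalso
  obtain ⟨y₁, hy₁, y₂, hy₂, hne⟩ :=
    (Set.one_lt_ncard (Set.toFinite _)).mp (hT.2.2.2 x₀ hleaf ▸ hΔ)
  have hcloser : ∀ y, G.Adj x₀ y → G.dist r y < G.dist r x₀ := fun y hy =>
    (hx₀ y).lt_of_ne (hT.isTree.dist_ne_of_adj r hy).symm
  exact hne (hT.isTree.eq_of_adj_of_dist_lt hy₁ hy₂ (hcloser y₁ hy₁) (hcloser y₂ hy₂))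

lemma pow_le_card_layer [Fintype V] (hT : IsTreeTDelta G r Δ d) {k : ℕ} (hk : k ≤ d) :
    (Δ - 1) ^ k ≤ (Finset.univ.filter fun x => G.dist r x = k).card := by
  induction k with
  | zero => exact Finset.card_pos.mpr ⟨r, by simp⟩
  | succ k ih =>
    set L : ℕ → Finset V := fun k => Finset.univ.filter fun x => G.dist r x = k
    have hm : ∀ x ∈ L k, Δ - 1 ≤ ((L (k + 1)).bipartiteAbove G.Adj x).card := by
      intro x hx
      have hxk : G.dist r x = k := (Finset.mem_filter.mp hx).2
      set N := Finset.univ.filter (G.Adj x)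
      have hN : N.card = Δ := by
        have hnbr : (G.neighborSet x).ncard = N.card := by
          rw [← Set.ncard_coe_finset]
          congr
          ext
          simp [N]
        exact hnbr ▸ hT.2.2.2 x fun h => by have := hT.dist_eq_of_ncard_eq_one h; omega
      have habove : N.filter (G.dist r · = k + 1) = (L (k + 1)).bipartiteAbove G.Adj x := by
        ext
        simp [N, L, Finset.bipartiteAbove, and_comm]
      have hbelow : (N.filter (¬ G.dist r · = k + 1)).card ≤ 1 := by
        refine (Finset.card_le_card fun y hy => ?_).trans
          (hT.isTree.card_filter_adj_dist_lt_le_one Finset.univ r x)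
        obtain ⟨hxy, hyk⟩ : G.Adj x y ∧ ¬ G.dist r y = k + 1 := by simpa [N] using hy
        have := hT.isTree.dist_eq_dist_add_one_of_adj r hxy
        exact Finset.mem_filter.mpr ⟨Finset.mem_univ _, hxy, by omega⟩
      have := N.card_filter_add_card_filter_not (G.dist r · = k + 1)
      rw [← habove]
      omega
    have hn : ∀ y ∈ L (k + 1), ((L k).bipartiteBelow G.Adj y).card ≤ 1 := by
      intro y hy
      have hyk : G.dist r y = k + 1 := (Finset.mem_filter.mp hy).2
      refine (Finset.card_le_card fun x hx => ?_).trans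
        (hT.isTree.card_filter_adj_dist_lt_le_one Finset.univ r y)
      obtain ⟨hxk, hxy⟩ : G.dist r x = k ∧ G.Adj x y := by
        simpa [L, Finset.bipartiteBelow] using hx
      exact Finset.mem_filter.mpr ⟨Finset.mem_univ _, hxy.symm, by omega⟩
    calc (Δ - 1) ^ (k + 1) = (Δ - 1) ^ k * (Δ - 1) := pow_succ _ _
      _ ≤ (L k).card * (Δ - 1) := Nat.mul_le_mul_right _ (ih (by omega))
      _ ≤ (L (k + 1)).card * 1 := Finset.card_mul_le_card_mul G.Adj hm hn
      _ = (L (k + 1)).card := mul_one _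

lemma pow_le_card [Fintype V] (hT : IsTreeTDelta G r Δ d) : (Δ - 1) ^ d ≤ Fintype.card V :=
  (hT.pow_le_card_layer le_rfl).trans (Finset.card_le_univ _)

lemma expIndepNum_le [Fintype V] (hT : IsTreeTDelta G r Δ d) (hΔ : 2 ≤ Δ) :
    expIndepNum V G ≤ 4 ^ d := by
  have hdiam : ∀ x y, G.dist x y ≤ 2 * d := fun x y => by
    have := hT.1.dist_triangle (u := x) (v := r) (w := y)
    have := G.dist_comm.trans_le (hT.dist_le hΔ x)
    have := hT.dist_le hΔ y
    omega
  refine csSup_le' ?_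
  rintro _ ⟨S, hS, rfl⟩
  exact (ExpIndep.card_le_two_pow hT.1 hS hdiam).trans_eq (by rw [pow_mul]; norm_num)

end IsTreeTDelta

/-- There is no constant `c > 0` with `α_e(T(6,d)) ≥ c·n(T(6,d)) + 1` for every positive
integer `d`: for every `c > 0` there is a positive integer `d` such that every finite
tree isomorphic to `T(6,d)` satisfies `α_e(T) < c·n(T) + 1`. -/
theorem stmt8 :
    ∀ c : ℝ, 0 < c → ∃ d : ℕ, 1 ≤ d ∧
      ∀ (V : Type) [Fintype V] (G : SimpleGraph V) (r : V),
        IsTreeTDelta G r 6 d →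
        (expIndepNum V G : ℝ) < c * (Fintype.card V : ℝ) + 1 := by
  intro c hc
  obtain ⟨n, hn⟩ := exists_pow_lt_of_lt_one hc (show (4 / 5 : ℝ) < 1 by norm_num)
  refine ⟨n + 1, by omega, fun V _ G r hT => ?_⟩
  have hα : (expIndepNum V G : ℝ) ≤ 4 ^ (n + 1) := by
    exact_mod_cast hT.expIndepNum_le (by norm_num)
  have hcard : (5 : ℝ) ^ (n + 1) ≤ Fintype.card V := by
    exact_mod_cast hT.pow_le_card
  have hratio : (4 / 5 : ℝ) ^ (n + 1) < c :=
    (pow_le_pow_of_le_one (by norm_num) (by norm_num) n.le_succ).trans_lt hn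
  calc (expIndepNum V G : ℝ) ≤ 4 ^ (n + 1) := hα
    _ = (4 / 5) ^ (n + 1) * 5 ^ (n + 1) := by rw [← mul_pow]; norm_num
    _ < c * 5 ^ (n + 1) := by gcongr
    _ ≤ c * Fintype.card V := by gcongr
    _ < c * Fintype.card V + 1 := lt_add_one _
end

section
/- For every positive integer k, the exponential independence number of the tree T_k equals (n(T_k) + 2)/3 = k + 2. -/
open SimpleGraph
open scoped Classical

/-- Vertices of the tree `T_k`: `.inl (i, 0) = aᵢ₊₁`, `.inl (i, 1) = bᵢ₊₁`,
`.inl (i, 2) = cᵢ₊₁` for `i : Fin k`, and `.inr (0, ·)`, `.inr (1, ·)` are the two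
further pendant paths attached to `a₁` and `a_k`, respectively. -/
abbrev TkVert (k : ℕ) := (Fin k × Fin 3) ⊕ (Fin 2 × Fin 2)

def TkGraph (k : ℕ) (hk : 0 < k) : SimpleGraph (TkVert k) :=
  SimpleGraph.fromRel (fun x y =>
    (∃ i j : Fin k, (i : ℕ) + 1 = (j : ℕ) ∧ x = Sum.inl (i, 0) ∧ y = Sum.inl (j, 0)) ∨
    (∃ i : Fin k, x = Sum.inl (i, 0) ∧ y = Sum.inl (i, 1)) ∨
    (∃ i : Fin k, x = Sum.inl (i, 1) ∧ y = Sum.inl (i, 2)) ∨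
    (x = Sum.inl (⟨0, hk⟩, 0) ∧ y = Sum.inr (0, 0)) ∨
    (x = Sum.inl (⟨k - 1, by omega⟩, 0) ∧ y = Sum.inr (1, 0)) ∨
    (∃ j : Fin 2, x = Sum.inr (j, 0) ∧ y = Sum.inr (j, 1)))

def TkLeaves (k : ℕ) : Finset (TkVert k) :=
  (Finset.univ.image fun i : Fin k => (Sum.inl (i, 2) : TkVert k)) ∪
    (Finset.univ.image fun j : Fin 2 => (Sum.inr (j, 1) : TkVert k))

variable {V : Type*}

@[simp]
lemma SimpleGraph.deleteSet_adj {G : SimpleGraph V} {A : Set V} {x y : V} :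
    (G.deleteSet A).Adj x y ↔ G.Adj x y ∧ x ∉ A ∧ y ∉ A :=
  Iff.rfl

section distDel

variable {G : SimpleGraph V} {S T : Set V} {u v : V}

lemma distDel_mono (h : T ⊆ S) : distDel G T u v ≤ distDel G S u v :=
  edist_anti fun _ _ hxy => ⟨hxy.1, fun hx => hxy.2.1 ⟨h hx.1, hx.2⟩,
    fun hy => hxy.2.2 ⟨h hy.1, hy.2⟩⟩

lemma distDel_le_one (h : G.Adj u v) : distDel G S u v ≤ 1 := by
  have a : (G.deleteSet (S \ {u, v})).Adj u v := by simp [h]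
  exact (Walk.cons a .nil).edist_le.trans (by simp)

lemma distDel_le_two {m : V} (h₁ : G.Adj u m) (h₂ : G.Adj m v) (hm : m ∉ S) :
    distDel G S u v ≤ 2 := by
  have a₁ : (G.deleteSet (S \ {u, v})).Adj u m := by simp [h₁, hm]
  have a₂ : (G.deleteSet (S \ {u, v})).Adj m v := by simp [h₂, hm]
  exact (Walk.cons a₁ (.cons a₂ .nil)).edist_le.trans (by simp)

lemma distDel_le_three {m₁ m₂ : V} (h₁ : G.Adj u m₁) (h₂ : G.Adj m₁ m₂) (h₃ : G.Adj m₂ v)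
    (hm₁ : m₁ ∉ S) (hm₂ : m₂ ∉ S) : distDel G S u v ≤ 3 := by
  have a₁ : (G.deleteSet (S \ {u, v})).Adj u m₁ := by simp [h₁, hm₁]
  have a₂ : (G.deleteSet (S \ {u, v})).Adj m₁ m₂ := by simp [h₂, hm₁, hm₂]
  have a₃ : (G.deleteSet (S \ {u, v})).Adj m₂ v := by simp [h₃, hm₂]
  exact (Walk.cons a₁ (.cons a₂ (.cons a₃ .nil))).edist_le.trans (by simp)

lemma le_add_length_of_adj {H : SimpleGraph V} {f : V → ℕ}
    (hf : ∀ x y, H.Adj x y → f y ≤ f x + 1) {a b : V} (p : H.Walk a b) :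
    f b ≤ f a + p.length := by
  induction p with
  | nil => simp
  | cons h _ ih => have := hf _ _ h; simp only [Walk.length_cons]; omega

lemma le_add_distDel {f : V → ℕ} (hf : ∀ x y, G.Adj x y → f y ≤ f x + 1) :
    (f v : ℕ∞) ≤ f u + distDel G S u v := by
  by_cases htop : distDel G S u v = ⊤
  · simp [htop]
  obtain ⟨p, hp⟩ := exists_walk_of_edist_ne_top htop
  rw [distDel, ← hp]
  exact_mod_cast le_add_length_of_adj (fun x y (hxy : (G.deleteSet _).Adj x y) => hf x y hxy.1) p

end distDel

noncomputable def expTerm (d : ℕ∞) : ℝ :=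
  if d = ⊤ then 0 else 2 * (1 / 2 : ℝ) ^ d.toNat

lemma expTerm_coe (n : ℕ) : expTerm n = 2 * (1 / 2 : ℝ) ^ n := by
  simp [expTerm]

lemma expTerm_nonneg (d : ℕ∞) : 0 ≤ expTerm d := by
  unfold expTerm; split <;> positivity

lemma expTerm_antitone : Antitone expTerm := by
  intro d e hde
  induction e using ENat.recTopCoe with
  | top => simpa [expTerm] using expTerm_nonneg d
  | coe n =>
    lift d to ℕ using ne_top_of_le_ne_top (ENat.natCast_ne_top n) hde
    rw [expTerm_coe, expTerm_coe]
    have : (1 / 2 : ℝ) ^ n ≤ (1 / 2) ^ d :=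
      pow_le_pow_of_le_one (by norm_num) (by norm_num) (by exact_mod_cast hde)
    linarith

section expW

variable {G : SimpleGraph V} {S T : Finset V} {u : V}

lemma sum_le_expW (lb : V → ℕ) (hT : T ⊆ S) (h : ∀ v ∈ T, distDel G S u v ≤ lb v) :
    ∑ v ∈ T, 2 * (1 / 2 : ℝ) ^ lb v ≤ expW G S u :=
  calc ∑ v ∈ T, 2 * (1 / 2 : ℝ) ^ lb v ≤ ∑ v ∈ T, expTerm (distDel G S u v) :=
        Finset.sum_le_sum fun v hv => expTerm_coe (lb v) ▸ expTerm_antitone (h v hv)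
    _ ≤ expW G S u :=
        Finset.sum_le_sum_of_subset_of_nonneg hT fun _ _ _ => expTerm_nonneg _

lemma expW_le_sum (lb : V → ℕ) (h : ∀ v ∈ S, (lb v : ℕ∞) ≤ distDel G S u v) :
    expW G S u ≤ ∑ v ∈ S, 2 * (1 / 2 : ℝ) ^ lb v :=
  Finset.sum_le_sum fun v hv => expTerm_coe (lb v) ▸ expTerm_antitone (h v hv)

end expW

namespace ExpIndep

variable {G : SimpleGraph V} {S : Finset V} {u v w x : V}

lemma sum_lt_one (hS : ExpIndep G S) (hu : u ∈ S) {T : Finset V} (hT : T ⊆ S) (huT : u ∉ T)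
    (lb : V → ℕ) (h : ∀ v ∈ T, distDel G S u v ≤ lb v) :
    ∑ v ∈ T, 2 * (1 / 2 : ℝ) ^ lb v < 1 := by
  refine (sum_le_expW lb (S := S.erase u) ?_ fun v hv => ?_).trans_lt (hS u hu)
  · exact fun v hv => Finset.mem_erase.2 ⟨fun h => huT (h ▸ hv), hT hv⟩
  · exact (distDel_mono (by simp)).trans (h v hv)

lemma not_adj (hS : ExpIndep G S) (hu : u ∈ S) (hv : v ∈ S) : ¬ G.Adj u v := fun huv => by
  have := hS.sum_lt_one hu (T := {v}) (by simpa) (by simpa using huv.ne) (fun _ => 1)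
    (by simpa using distDel_le_one huv)
  norm_num at this

lemma false_of_two_at_dist_two (hS : ExpIndep G S) (hu : u ∈ S) (hv : v ∈ S) (hw : w ∈ S)
    (hvw : v ≠ w) (hvu : v ≠ u) (hwu : w ≠ u)
    (hv₂ : distDel G S u v ≤ 2) (hw₂ : distDel G S u w ≤ 2) : False := by
  have := hS.sum_lt_one hu (T := {v, w}) (by simp [Finset.insert_subset_iff, hv, hw])
    (by simp [hvu.symm, hwu.symm]) (fun _ => 2) (by simp [hv₂, hw₂])
  rw [Finset.sum_pair hvw] at this
  norm_num at this

lemma false_of_dist_two_three_three (hS : ExpIndep G S) (hu : u ∈ S) (hv : v ∈ S)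
    (hw : w ∈ S) (hx : x ∈ S) (hvw : v ≠ w) (hvx : v ≠ x) (hwx : w ≠ x)
    (hvu : v ≠ u) (hwu : w ≠ u) (hxu : x ≠ u) (hv₂ : distDel G S u v ≤ 2)
    (hw₃ : distDel G S u w ≤ 3) (hx₃ : distDel G S u x ≤ 3) : False := by
  have := hS.sum_lt_one hu (T := {v, w, x}) (by simp [Finset.insert_subset_iff, hv, hw, hx])
    (by simp [hvu.symm, hwu.symm, hxu.symm]) (fun y => if y = v then 2 else 3)
    (by simp [hv₂, hw₃, hx₃, hvw.symm, hvx.symm])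
  rw [Finset.sum_insert (by simp [hvw, hvx]), Finset.sum_pair hwx] at this
  simp only [if_neg hvw.symm, if_neg hvx.symm] at this
  norm_num at this

end ExpIndep

lemma sum_half_pow_le_two (t : Finset ℕ) : ∑ n ∈ t, (1 / 2 : ℝ) ^ n ≤ 2 :=
  calc ∑ n ∈ t, (1 / 2 : ℝ) ^ n ≤ ∑ n ∈ Finset.range (t.sup id + 1), (1 / 2 : ℝ) ^ n :=
        Finset.sum_le_sum_of_subset_of_nonneg
          (fun n hn => Finset.mem_range.2 (Nat.lt_succ_of_le (Finset.le_sup (f := id) hn)))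
          fun _ _ _ => by positivity
    _ ≤ 2 := sum_geometric_two_le _

lemma sum_half_pow_comp_le_two {α : Type*} {s : Finset α} {e : α → ℕ} (he : Set.InjOn e s) :
    ∑ a ∈ s, (1 / 2 : ℝ) ^ e a ≤ 2 := by
  rw [← Finset.sum_image he]
  exact sum_half_pow_le_two _

lemma sum_half_pow_dist_le_four (s : Finset ℕ) (p : ℕ) :
    ∑ i ∈ s, (1 / 2 : ℝ) ^ Nat.dist i p ≤ 4 := by
  rw [← Finset.sum_filter_add_sum_filter_not s (· < p)]
  have h₁ : Set.InjOn (Nat.dist · p) ↑(s.filter (· < p)) := by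
    intro i hi j hj h
    simp only [Finset.mem_coe, Finset.mem_filter] at hi hj
    simp only [Nat.dist] at h
    omega
  have h₂ : Set.InjOn (Nat.dist · p) ↑(s.filter fun i => ¬ i < p) := by
    intro i hi j hj h
    simp only [Finset.mem_coe, Finset.mem_filter] at hi hj
    simp only [Nat.dist] at h
    omega
  linarith [sum_half_pow_comp_le_two h₁, sum_half_pow_comp_le_two h₂]

namespace TkGraph

variable {k : ℕ} {hk : 0 < k}

lemma adj_spine {i j : Fin k} (h : (i : ℕ) + 1 = j) :
    (TkGraph k hk).Adj (.inl (i, 0)) (.inl (j, 0)) := by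
  simp [TkGraph, h]
  omega

lemma adj_ab (i : Fin k) : (TkGraph k hk).Adj (.inl (i, 0)) (.inl (i, 1)) := by
  simp [TkGraph]

lemma adj_bc (i : Fin k) : (TkGraph k hk).Adj (.inl (i, 1)) (.inl (i, 2)) := by
  simp [TkGraph]

lemma adj_first_pendant {i : Fin k} (hi : (i : ℕ) = 0) :
    (TkGraph k hk).Adj (.inl (i, 0)) (.inr (0, 0)) := by
  simp [TkGraph, Fin.ext_iff, hi]

lemma adj_last_pendant {i : Fin k} (hi : (i : ℕ) = k - 1) :
    (TkGraph k hk).Adj (.inl (i, 0)) (.inr (1, 0)) := by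
  simp [TkGraph, Fin.ext_iff, hi]

lemma adj_pendant (j : Fin 2) : (TkGraph k hk).Adj (.inr (j, 0)) (.inr (j, 1)) := by
  simp [TkGraph]
  omega

end TkGraph

section Legs

variable {k : ℕ}

-- `tkDist u x` is the distance in `T_k`, viewed as `k + 2` legs hanging from the spine
-- `a₁ … a_k`: the two pendant paths hang from `a₁` and `a_k`, their vertices at depth 1 and 2.
def legOf : TkVert k → Fin k ⊕ Fin 2 := Sum.map Prod.fst Prod.fst

def legRoot : Fin k ⊕ Fin 2 → TkVert k := Sum.map (·, 0) (·, 0)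

def depth : TkVert k → ℕ
  | .inl (_, t) => t
  | .inr (_, t) => t + 1

def spinePos : TkVert k → ℕ
  | .inl (i, _) => i
  | .inr (j, _) => if j = 0 then 0 else k - 1

def tkDist (u x : TkVert k) : ℕ :=
  if legOf x = legOf u then Nat.dist (depth x) (depth u)
  else depth x + depth u + Nat.dist (spinePos x) (spinePos u)

@[simp]
lemma spinePos_inl (i : Fin k) (t : Fin 3) : spinePos (.inl (i, t) : TkVert k) = i :=
  rfl

@[simp]
lemma legOf_legRoot (ℓ : Fin k ⊕ Fin 2) : legOf (legRoot ℓ) = ℓ := by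
  cases ℓ <;> rfl

@[simp]
lemma tkDist_self (u : TkVert k) : tkDist u u = 0 := by
  simp [tkDist]

lemma tkDist_le_of_adj {hk : 0 < k} (u : TkVert k) {x y : TkVert k}
    (h : (TkGraph k hk).Adj x y) : tkDist u y ≤ tkDist u x + 1 := by
  rw [TkGraph, fromRel_adj] at h
  obtain ⟨-, h | h⟩ := h <;>
  rcases h with ⟨i, j, hij, rfl, rfl⟩ | ⟨i, rfl, rfl⟩ | ⟨i, rfl, rfl⟩ | ⟨rfl, rfl⟩ | ⟨rfl, rfl⟩ |
    ⟨j, rfl, rfl⟩ <;>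
  rcases u with ⟨i', t'⟩ | ⟨j', t'⟩ <;>
  simp only [tkDist, legOf, depth, spinePos, Nat.dist, Sum.map_inl, Sum.map_inr, Sum.inl.injEq,
    Sum.inr.injEq, reduceCtorEq, if_false, Fin.ext_iff] <;>
  split_ifs <;> omega

lemma tkDist_le_distDel {hk : 0 < k} (S : Set (TkVert k)) (u v : TkVert k) :
    (tkDist u v : ℕ∞) ≤ distDel (TkGraph k hk) S u v := by
  simpa using le_add_distDel (S := S) (u := u) (v := v) fun x y => tkDist_le_of_adj (hk := hk) u

end Legs

section Leaves

variable {k : ℕ}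

lemma mem_tkLeaves {v : TkVert k} :
    v ∈ TkLeaves k ↔ (∃ i, v = .inl (i, 2)) ∨ ∃ j, v = .inr (j, 1) := by
  simp [TkLeaves, eq_comm]

lemma card_tkLeaves (k : ℕ) : (TkLeaves k).card = k + 2 := by
  rw [TkLeaves, Finset.card_union_of_disjoint (by simp [Finset.disjoint_left]),
    Finset.card_image_of_injective _ (by intro _ _ h; simpa using h),
    Finset.card_image_of_injective _ (by intro _ _ h; simpa using h)]
  simp

lemma sum_tkLeaves (g : TkVert k → ℝ) :
    ∑ v ∈ TkLeaves k, g v = ∑ i : Fin k, g (.inl (i, 2)) + ∑ j : Fin 2, g (.inr (j, 1)) := by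
  rw [TkLeaves, Finset.sum_union (by simp [Finset.disjoint_left]),
    Finset.sum_image (by intro _ _ _ _ h; simpa using h),
    Finset.sum_image (by intro _ _ _ _ h; simpa using h)]

lemma tkDist_of_mem_tkLeaves {u v : TkVert k} (hu : u ∈ TkLeaves k) (hv : v ∈ TkLeaves k)
    (huv : u ≠ v) : tkDist u v = Nat.dist (spinePos v) (spinePos u) + 4 := by
  rw [mem_tkLeaves] at hu hv
  have hleg : legOf v ≠ legOf u := by
    rcases hu with ⟨i, rfl⟩ | ⟨i, rfl⟩ <;> rcases hv with ⟨j, rfl⟩ | ⟨j, rfl⟩ <;>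
      simp_all [legOf, eq_comm]
  have hdepth : depth u = 2 ∧ depth v = 2 := by
    rcases hu with ⟨i, rfl⟩ | ⟨i, rfl⟩ <;> rcases hv with ⟨j, rfl⟩ | ⟨j, rfl⟩ <;> simp [depth]
  rw [tkDist, if_neg hleg, hdepth.1, hdepth.2]
  ring

lemma expW_le_of_subset_tkLeaves {hk : 0 < k} {T : Finset (TkVert k)} {u : TkVert k}
    (hu : u ∈ TkLeaves k) (hT : T ⊆ TkLeaves k) (huT : u ∉ T) :
    expW (TkGraph k hk) T u ≤ 3 / 4 := by
  set g : TkVert k → ℝ := fun v => (1 / 2 : ℝ) ^ Nat.dist (spinePos v) (spinePos u)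
  calc expW (TkGraph k hk) T u ≤ ∑ v ∈ T, 2 * (1 / 2 : ℝ) ^ tkDist u v :=
        expW_le_sum _ fun v _ => tkDist_le_distDel _ u v
    _ = ∑ v ∈ T, g v / 8 := Finset.sum_congr rfl fun v hv => by
        rw [tkDist_of_mem_tkLeaves hu (hT hv) (fun h => huT (h ▸ hv)), pow_add]
        norm_num [g]
        ring
    _ ≤ ∑ v ∈ TkLeaves k, g v / 8 :=
        Finset.sum_le_sum_of_subset_of_nonneg hT fun _ _ _ => by positivity
    _ = (∑ i ∈ Finset.range k, (1 / 2 : ℝ) ^ Nat.dist i (spinePos u)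
          + g (.inr (0, 1)) + g (.inr (1, 1))) / 8 := by
        rw [← Finset.sum_div, sum_tkLeaves, Fin.sum_univ_two, add_assoc]
        simp only [g, spinePos_inl]
        rw [Fin.sum_univ_eq_sum_range (fun i => (1 / 2 : ℝ) ^ Nat.dist i (spinePos u))]
    _ ≤ (4 + 1 + 1) / 8 := by
        gcongr
        · exact sum_half_pow_dist_le_four _ _
        · exact pow_le_one₀ (by norm_num) (by norm_num)
        · exact pow_le_one₀ (by norm_num) (by norm_num)
    _ = 3 / 4 := by norm_num

lemma expIndep_tkLeaves (hk : 0 < k) : ExpIndep (TkGraph k hk) (TkLeaves k) := by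
  intro u hu
  refine (expW_le_of_subset_tkLeaves hu ?_ ?_).trans_lt (by norm_num : (3 / 4 : ℝ) < 1)
  -- `ExpIndep` erases with the classical `DecidableEq` instance, so `Finset.erase_subset`
  -- does not unify here.
  · intro v hv
    simp_all
  · simp

end Leaves

namespace ExpIndep

variable {k : ℕ} {hk : 0 < k} {S : Finset (TkVert k)}

lemma distDel_spine_leaf_le_two (hS : ExpIndep (TkGraph k hk) S) {i : Fin k}
    (ha : .inl (i, 0) ∈ S) : distDel (TkGraph k hk) S (.inl (i, 0)) (.inl (i, 2)) ≤ 2 :=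
  distDel_le_two (TkGraph.adj_ab i) (TkGraph.adj_bc i) fun hb => hS.not_adj ha hb (TkGraph.adj_ab i)

lemma eq_of_legOf_eq (hS : ExpIndep (TkGraph k hk) S) {x y : TkVert k} (hx : x ∈ S)
    (hy : y ∈ S) (h : legOf x = legOf y)
    (hx' : ∀ i, x = .inl (i, 0) → (.inl (i, 2) : TkVert k) ∉ S)
    (hy' : ∀ i, y = .inl (i, 0) → (.inl (i, 2) : TkVert k) ∉ S) : x = y := by
  rcases x with ⟨i, t⟩ | ⟨i, t⟩ <;> rcases y with ⟨j, s⟩ | ⟨j, s⟩ <;>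
    simp only [legOf, Sum.map_inl, Sum.map_inr, Sum.inl.injEq, Sum.inr.injEq,
      reduceCtorEq] at h <;> subst h <;> fin_cases t <;> fin_cases s <;>
    first
    | rfl
    | exact absurd (TkGraph.adj_ab i) (hS.not_adj hx hy)
    | exact absurd (TkGraph.adj_ab i) (hS.not_adj hy hx)
    | exact absurd (TkGraph.adj_bc i) (hS.not_adj hx hy)
    | exact absurd (TkGraph.adj_bc i) (hS.not_adj hy hx)
    | exact absurd (TkGraph.adj_pendant i) (hS.not_adj hx hy)
    | exact absurd (TkGraph.adj_pendant i) (hS.not_adj hy hx)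
    | exact absurd hy (hx' i rfl)
    | exact absurd hx (hy' i rfl)

lemma leaf_of_mem_adjacent_leg (hS : ExpIndep (TkGraph k hk) S) {i : Fin k}
    (ha : .inl (i, 0) ∈ S) (hc : .inl (i, 2) ∈ S) {ℓ : Fin k ⊕ Fin 2}
    (hℓ : (TkGraph k hk).Adj (.inl (i, 0)) (legRoot ℓ)) {y : TkVert k} (hy : y ∈ S)
    (hyℓ : legOf y = ℓ) :
    ∃ j, y = .inl (j, 2) ∧ (.inl (j, 0) : TkVert k) ∉ S ∧ (.inl (j, 1) : TkVert k) ∉ S := by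
  have hroot : legRoot ℓ ∉ S := fun h => hS.not_adj ha h hℓ
  have hchild : ∀ z ∈ S, (TkGraph k hk).Adj (legRoot ℓ) z → z ≠ .inl (i, 0) →
      z ≠ .inl (i, 2) → False := fun z hz hadj hza hzc =>
    hS.false_of_two_at_dist_two ha hc hz (Ne.symm hzc) (by simp) hza
      (hS.distDel_spine_leaf_le_two ha) (distDel_le_two hℓ hadj hroot)
  subst hyℓ
  rcases y with ⟨j, t⟩ | ⟨j, t⟩ <;> fin_cases t
  · exact absurd hy hroot
  · exact (hchild _ hy (TkGraph.adj_ab j) (by simp) (by simp)).elim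
  · exact ⟨j, rfl, hroot, fun h => hchild _ h (TkGraph.adj_ab j) (by simp) (by simp)⟩
  · exact absurd hy hroot
  · exact (hchild _ hy (TkGraph.adj_pendant j) (by simp) (by simp)).elim

lemma exists_free_adjacent_leg (hS : ExpIndep (TkGraph k hk) S) {i : Fin k}
    (ha : .inl (i, 0) ∈ S) (hc : .inl (i, 2) ∈ S) :
    ∃ ℓ, (TkGraph k hk).Adj (.inl (i, 0)) (legRoot ℓ) ∧ ∀ y ∈ S, legOf y ≠ ℓ := by
  by_contra! hocc
  by_cases h₀ : (i : ℕ) = 0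
  · have hℓ : (TkGraph k hk).Adj (.inl (i, 0)) (legRoot (.inr 0)) := TkGraph.adj_first_pendant h₀
    obtain ⟨y, hy, hyℓ⟩ := hocc _ hℓ
    obtain ⟨j, rfl, -⟩ := hS.leaf_of_mem_adjacent_leg ha hc hℓ hy hyℓ
    simp [legOf] at hyℓ
  by_cases h₁ : (i : ℕ) = k - 1
  · have hℓ : (TkGraph k hk).Adj (.inl (i, 0)) (legRoot (.inr 1)) := TkGraph.adj_last_pendant h₁
    obtain ⟨y, hy, hyℓ⟩ := hocc _ hℓ
    obtain ⟨j, rfl, -⟩ := hS.leaf_of_mem_adjacent_leg ha hc hℓ hy hyℓ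
    simp [legOf] at hyℓ
  have hprev : (TkGraph k hk).Adj (.inl (i, 0)) (legRoot (.inl ⟨i - 1, by omega⟩)) :=
    (TkGraph.adj_spine (by simp; omega)).symm
  have hnext : (TkGraph k hk).Adj (.inl (i, 0)) (legRoot (.inl ⟨i + 1, by omega⟩)) :=
    TkGraph.adj_spine rfl
  obtain ⟨y₁, hy₁, hyℓ₁⟩ := hocc _ hprev
  obtain ⟨y₂, hy₂, hyℓ₂⟩ := hocc _ hnext
  obtain ⟨j₁, rfl, ha₁, hb₁⟩ := hS.leaf_of_mem_adjacent_leg ha hc hprev hy₁ hyℓ₁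
  obtain ⟨j₂, rfl, ha₂, hb₂⟩ := hS.leaf_of_mem_adjacent_leg ha hc hnext hy₂ hyℓ₂
  simp only [legOf, Sum.map_inl, Sum.inl.injEq] at hyℓ₁ hyℓ₂
  subst hyℓ₁ hyℓ₂
  exact hS.false_of_dist_two_three_three ha hc hy₁ hy₂
    (by simp [Fin.ext_iff]; omega) (by simp [Fin.ext_iff]) (by simp [Fin.ext_iff])
    (by simp) (by simp) (by simp) (hS.distDel_spine_leaf_le_two ha)
    (distDel_le_three hprev (TkGraph.adj_ab _) (TkGraph.adj_bc _) ha₁ hb₁)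
    (distDel_le_three hnext (TkGraph.adj_ab _) (TkGraph.adj_bc _) ha₂ hb₂)

lemma eq_of_adj_free_leg (hS : ExpIndep (TkGraph k hk) S) {i j : Fin k}
    (ha : .inl (i, 0) ∈ S) (hc : .inl (i, 2) ∈ S) (ha' : .inl (j, 0) ∈ S) {ℓ : Fin k ⊕ Fin 2}
    (hi : (TkGraph k hk).Adj (.inl (i, 0)) (legRoot ℓ))
    (hj : (TkGraph k hk).Adj (.inl (j, 0)) (legRoot ℓ)) (hfree : ∀ y ∈ S, legOf y ≠ ℓ) :
    i = j := by
  by_contra hne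
  exact hS.false_of_two_at_dist_two ha hc ha' (by simp) (by simp) (by simpa using Ne.symm hne)
    (hS.distDel_spine_leaf_le_two ha)
    (distDel_le_two hi hj.symm fun h => hfree _ h (legOf_legRoot ℓ))

lemma card_le (hS : ExpIndep (TkGraph k hk) S) : S.card ≤ k + 2 := by
  set R := S.filter fun x => ∃ i, x = .inl (i, 0) ∧ (.inl (i, 2) : TkVert k) ∈ S
  have hfree : ∀ x, ∃ ℓ, x ∈ R → (TkGraph k hk).Adj x (legRoot ℓ) ∧ ∀ y ∈ S, legOf y ≠ ℓ := by
    intro x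
    by_cases hx : x ∈ R
    · obtain ⟨hxS, i, rfl, hc⟩ := Finset.mem_filter.1 hx
      obtain ⟨ℓ, hℓ⟩ := hS.exists_free_adjacent_leg hxS hc
      exact ⟨ℓ, fun _ => hℓ⟩
    · exact ⟨.inr 0, fun h => absurd h hx⟩
  choose g hg using hfree
  have hinj_legOf : Set.InjOn legOf ((S \ R : Finset (TkVert k)) : Set (TkVert k)) := by
    intro x hx y hy h
    simp only [Finset.coe_sdiff, Set.mem_sdiff, Finset.mem_coe, R, Finset.mem_filter, not_and,
      not_exists] at hx hy
    exact hS.eq_of_legOf_eq hx.1 hy.1 h (hx.2 hx.1) (hy.2 hy.1)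
  have hinj_g : Set.InjOn g (R : Set (TkVert k)) := by
    intro x hx y hy h
    obtain ⟨hxS, i, rfl, hc⟩ := Finset.mem_filter.1 hx
    obtain ⟨hyS, j, rfl, -⟩ := Finset.mem_filter.1 hy
    rw [hS.eq_of_adj_free_leg hxS hc hyS (hg _ hx).1 (h ▸ (hg _ hy).1) (hg _ hx).2]
  have hdisj : Disjoint ((S \ R).image legOf) (R.image g) := by
    rw [Finset.disjoint_left]
    intro ℓ hℓ hℓ'
    obtain ⟨y, hy, rfl⟩ := Finset.mem_image.1 hℓ
    obtain ⟨x, hx, hxy⟩ := Finset.mem_image.1 hℓ'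
    exact (hg x hx).2 y (Finset.mem_sdiff.1 hy).1 hxy.symm
  calc S.card = (S \ R).card + R.card :=
        (Finset.card_sdiff_add_card_eq_card (Finset.filter_subset _ _)).symm
    _ = ((S \ R).image legOf ∪ R.image g).card := by
        rw [Finset.card_union_of_disjoint hdisj, Finset.card_image_of_injOn hinj_legOf,
          Finset.card_image_of_injOn hinj_g]
    _ ≤ Fintype.card (Fin k ⊕ Fin 2) := Finset.card_le_univ _
    _ = k + 2 := by simp

end ExpIndep

/-- For every positive integer `k`, the exponential independence number of the tree
`T_k` of order `n(T_k) = 3k + 4` equals `(n(T_k) + 2)/3 = k + 2`. -/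
theorem stmt11 (k : ℕ) (hk : 0 < k) :
    Fintype.card (TkVert k) = 3 * k + 4 ∧
    expIndepNum (TkVert k) (TkGraph k hk) = k + 2 := by
  refine ⟨by simp [TkVert]; ring, IsGreatest.csSup_eq ⟨⟨TkLeaves k, expIndep_tkLeaves hk,
    card_tkLeaves k⟩, ?_⟩⟩
  rintro _ ⟨S, hS, rfl⟩
  exact hS.card_le
end
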